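/- arXiv:2512.00286 — 2 statements merged into one kernel-verified Lean document; each statement's English description precedes it below -/
import Mathlib

section
/- Let (H, B) be a Rota–Baxter Hopf algebra of weight −1. Define x *_B y = B(x₁) y S(B(x₂)) x₃ and S_B(x) = S(B(x₁)) S(x₂) B(x₃). Then H_B = (H, *_B, 1, Δ, ε, S_B) is a cocommutative Hopf algebra; explicitly: (i) *_B is associative, (ii) 1 is a two-sided unit for *_B, (iii) Δ(x *_B y) = (x₁ *_B y₁) ⊗ (x₂ *_B y₂) and ε(x *_B y) = ε(x)ε(y) for all x, y ∈ H (so Δ and ε are algebra maps for *_B), and (iv) S_B(x₁) *_B x₂ = ε(x)1 = x₁ *_B S_B(x₂) for all x ∈ H. -/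
/-!
Work in the convolution monoid of linear maps `C → H` out of a cocommutative coalgebra `C`.
There, precomposition with a coalgebra map is multiplicative, convolution products of coalgebra
maps are coalgebra maps, and a coalgebra map `φ` has convolution inverse `S ∘ φ`. In particular
the antipode of a cocommutative `H` is a coalgebra map, and so is every word in `B`, `S` and the
two tensor projections of `H ⊗ H`; this gives (iii), since `*_B` is such a word.

For coalgebra maps `u, v : C → H`, the map `x ↦ u(x₁) *_B v(x₂)` is the convolution product
`B(u) ⋆ v ⋆ B(u)⁻¹ ⋆ u`, and the Rota–Baxter identity says `B(u *_B v) = B(u) ⋆ B(v)`.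
Associativity is then an identity between words in a group, checked on the three projections of
`H ⊗ H ⊗ H`. For the antipode, `x₁ *_B S_B(x₂) = ε(x)` is a one-line cancellation; applying `B`
to it gives `B ∘ S_B = S ∘ B`, which gives the other side.
-/

open TensorProduct LinearMap

noncomputable section

universe u

section

variable {K H : Type u} [Field K] [CharZero K] [Ring H] [HopfAlgebra K H]

/-- The antipode of `H` as a `K`-linear map. -/
def aS (K H : Type u) [Field K] [Ring H] [HopfAlgebra K H] : H →ₗ[K] H :=
  HopfAlgebra.antipode K

/-- Convolution-type composite: `conv f g x = f x₁ * g x₂` in Sweedler notation,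
where the source may be any coalgebra `C`. -/
def conv {C : Type u} [AddCommGroup C] [Module K C] [Coalgebra K C]
    (f g : C →ₗ[K] H) : C →ₗ[K] H :=
  LinearMap.mul' K H ∘ₗ TensorProduct.map f g ∘ₗ Coalgebra.comul

/-- `wrap f g h (a ⊗ₜ c) = f a₁ * (g c * h a₂)` in Sweedler notation. -/
def wrap {C : Type u} [AddCommGroup C] [Module K C] [Coalgebra K C]
    (f : C →ₗ[K] H) (g : H →ₗ[K] H) (h : C →ₗ[K] H) : C ⊗[K] H →ₗ[K] H :=
  LinearMap.mul' K H ∘ₗ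
    TensorProduct.map f
      (LinearMap.mul' K H ∘ₗ TensorProduct.map g h ∘ₗ (TensorProduct.comm K C H).toLinearMap) ∘ₗ
    (TensorProduct.assoc K C C H).toLinearMap ∘ₗ
    TensorProduct.map Coalgebra.comul LinearMap.id

/-- The descendent product: `mulB B (x ⊗ₜ y) = B x₁ * (y * (S (B x₂) * x₃))`,
i.e. `x *_B y = B(x₁) y S(B(x₂)) x₃` in Sweedler notation. -/
def mulB (B : H →ₗ[K] H) : H ⊗[K] H →ₗ[K] H :=
  wrap B LinearMap.id (conv (aS K H ∘ₗ B) LinearMap.id)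

/-- `Bt B x = x₁ * B (S x₂)`, i.e. the operator `B̃`. -/
def Bt (B : H →ₗ[K] H) : H →ₗ[K] H := conv LinearMap.id (B ∘ₗ aS K H)

/-- `SB B x = S(B x₁) * (S x₂ * B x₃)`, the antipode `S_B` of the descendent Hopf algebra. -/
def SB (B : H →ₗ[K] H) : H →ₗ[K] H := conv (aS K H ∘ₗ B) (conv (aS K H) B)

/-- `H` is cocommutative. -/
def IsCocomm (K H : Type u) [Field K] [Ring H] [HopfAlgebra K H] : Prop :=
  ∀ x : H, (TensorProduct.comm K H H) (Coalgebra.comul x) = Coalgebra.comul x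

/-- `B` is a Rota–Baxter operator of weight `-1` on `H`: it is a coalgebra map and
`B x * B y = B (B(x₁) y S(B(x₂)) x₃)` in Sweedler notation. -/
def IsRotaBaxter (B : H →ₗ[K] H) : Prop :=
  (Coalgebra.comul ∘ₗ B = TensorProduct.map B B ∘ₗ Coalgebra.comul) ∧
  (Coalgebra.counit ∘ₗ B = Coalgebra.counit) ∧
  ∀ x y : H, B x * B y = B (mulB B (x ⊗ₜ[K] y))

end

open WithConv
open scoped Coalgebra

namespace LinearMap

variable {R A C D : Type*} [CommSemiring R] [Semiring A] [Algebra R A]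
  [AddCommMonoid C] [Module R C] [Coalgebra R C] [AddCommMonoid D] [Module R D] [Coalgebra R D]

def convCompCoalgHom (h : D →ₗc[R] C) : WithConv (C →ₗ[R] A) →* WithConv (D →ₗ[R] A) where
  toFun f := toConv (f.ofConv ∘ₗ (h : D →ₗ[R] C))
  map_one' := by ext; simp
  map_mul' f g := congrArg toConv (convMul_comp_coalgHom_distrib f g h)

@[simp] lemma convCompCoalgHom_toConv (h : D →ₗc[R] C) (f : C →ₗ[R] A) :
    convCompCoalgHom h (toConv f) = toConv (f ∘ₗ (h : D →ₗ[R] C)) := rfl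

end LinearMap

namespace HopfAlgebra

variable {R H A C : Type*} [CommSemiring R] [Semiring H] [HopfAlgebra R H] [Semiring A]
  [Algebra R A] [AddCommMonoid C] [Module R C] [Coalgebra R C]

lemma antipode_comp_coalgHom_mul (φ : C →ₗc[R] H) :
    toConv (antipode R ∘ₗ (φ : C →ₗ[R] H)) * toConv (φ : C →ₗ[R] H) = 1 := by
  have h := congr(convCompCoalgHom φ $(antipode_mul_id (R := R) (C := H)))
  rwa [map_mul, map_one, convCompCoalgHom_toConv, convCompCoalgHom_toConv, id_comp] at h

lemma coalgHom_mul_antipode_comp (φ : C →ₗc[R] H) :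
    toConv (φ : C →ₗ[R] H) * toConv (antipode R ∘ₗ (φ : C →ₗ[R] H)) = 1 := by
  have h := congr(convCompCoalgHom φ $(id_mul_antipode (R := R) (C := H)))
  rwa [map_mul, map_one, convCompCoalgHom_toConv, convCompCoalgHom_toConv, id_comp] at h

lemma antipode_comp_convMul [Coalgebra.IsCocomm R C] (f g : WithConv (C →ₗ[R] H)) :
    toConv (antipode R ∘ₗ (f * g).ofConv) =
      toConv (antipode R ∘ₗ g.ofConv) * toConv (antipode R ∘ₗ f.ofConv) := by
  ext x
  simp only [comp_apply, convMul_apply]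
  conv_lhs => rw [← Coalgebra.comm_comul R x]
  induction Coalgebra.comul (R := R) x using TensorProduct.induction_on with
  | zero => simp
  | tmul a b => simp [antipode_mul_antidistrib]
  | add a b ha hb => simp only [map_add, ha, hb]

lemma algHom_comp_antipode_mul (ψ : H →ₐ[R] A) :
    toConv (ψ.toLinearMap ∘ₗ antipode R) * toConv ψ.toLinearMap = 1 := by
  have h := congr(ψ.toLinearMap ∘ₗ $(antipode_mul_id (R := R) (C := H)).ofConv)
  rw [algHom_comp_convMul_distrib, comp_id] at h
  refine WithConv.ext (h.trans ?_)
  ext; simp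

/-- Both sides are convolution inverses of `Δ = ι₁ ⋆ ι₂`, where `ι₁ x = x ⊗ 1` and
`ι₂ x = 1 ⊗ x`: the right side is `(ι₂ ∘ S) ⋆ (ι₁ ∘ S)`. -/
lemma comul_comp_antipode :
    Coalgebra.comul ∘ₗ antipode R =
      TensorProduct.map (antipode R) (antipode R) ∘ₗ (TensorProduct.comm R H H).toLinearMap ∘ₗ
        (Coalgebra.comul : H →ₗ[R] H ⊗[R] H) := by
  let ι₁ := (Algebra.TensorProduct.includeLeft : H →ₐ[R] H ⊗[R] H)
  let ι₂ := (Algebra.TensorProduct.includeRight : H →ₐ[R] H ⊗[R] H)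
  have hcomul : toConv (Coalgebra.comul : H →ₗ[R] H ⊗[R] H) =
      toConv ι₁.toLinearMap * toConv ι₂.toLinearMap := by
    ext x
    rw [(ℛ R x).convMul_apply, ← (ℛ R x).eq]
    simp [ι₁, ι₂, Algebra.TensorProduct.tmul_mul_tmul]
  have hswap : toConv (TensorProduct.map (antipode R) (antipode R) ∘ₗ
        (TensorProduct.comm R H H).toLinearMap ∘ₗ (Coalgebra.comul : H →ₗ[R] H ⊗[R] H)) =
      toConv (ι₂.toLinearMap ∘ₗ antipode R) * toConv (ι₁.toLinearMap ∘ₗ antipode R) := by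
    ext x
    rw [(ℛ R x).convMul_apply, ofConv_toConv, comp_apply, comp_apply, ← (ℛ R x).eq]
    simp [ι₁, ι₂, Algebra.TensorProduct.tmul_mul_tmul]
  have hleft : toConv (TensorProduct.map (antipode R) (antipode R) ∘ₗ
        (TensorProduct.comm R H H).toLinearMap ∘ₗ (Coalgebra.comul : H →ₗ[R] H ⊗[R] H)) *
      toConv Coalgebra.comul = 1 := by
    rw [hswap, hcomul, mul_assoc, ← mul_assoc (toConv (ι₁.toLinearMap ∘ₗ antipode R)),
      algHom_comp_antipode_mul, one_mul, algHom_comp_antipode_mul]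
  exact congr(ofConv $(left_inv_eq_right_inv hleft comul_right_inv)).symm

variable [Coalgebra.IsCocomm R H]

def antipodeCoalgHom : H →ₗc[R] H where
  toLinearMap := antipode R
  counit_comp := counit_comp_antipode
  map_comp_comul := by
    rw [comul_comp_antipode, Coalgebra.comm_comp_comul]

end HopfAlgebra

namespace Coalgebra

lemma sum_counit_smul' {R C ι : Type*} [CommSemiring R] [AddCommMonoid C] [Module R C]
    [Coalgebra R C] {a : C} (𝓡 : Repr R a ι) :
    ∑ i ∈ 𝓡.index, counit (R := R) (𝓡.right i) • 𝓡.left i = a := by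
  simpa only [map_sum, _root_.TensorProduct.rid_tmul, one_smul]
    using congr(_root_.TensorProduct.rid R C $(sum_tmul_counit_eq 𝓡))

end Coalgebra

namespace Coalgebra.TensorProduct

variable {R A C D E C' D' : Type*} [CommSemiring R] [Semiring A] [Algebra R A]
  [AddCommMonoid C] [Module R C] [Coalgebra R C] [AddCommMonoid D] [Module R D] [Coalgebra R D]
  [AddCommMonoid E] [Module R E] [Coalgebra R E] [AddCommMonoid C'] [Module R C']
  [Coalgebra R C'] [AddCommMonoid D'] [Module R D'] [Coalgebra R D']

variable (R C D) in
def fst : C ⊗[R] D →ₗc[R] C :=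
  (Coalgebra.TensorProduct.rid R R C).toCoalgHom.comp
    (Coalgebra.TensorProduct.map (CoalgHom.id R C) (Coalgebra.counitCoalgHom R D))

variable (R C D) in
def snd : C ⊗[R] D →ₗc[R] D :=
  (Coalgebra.TensorProduct.lid R D).toCoalgHom.comp
    (Coalgebra.TensorProduct.map (Coalgebra.counitCoalgHom R C) (CoalgHom.id R D))

@[simp] lemma fst_tmul (c : C) (d : D) : fst R C D (c ⊗ₜ d) = counit (R := R) d • c := by
  simp [fst]

@[simp] lemma snd_tmul (c : C) (d : D) : snd R C D (c ⊗ₜ d) = counit (R := R) c • d := by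
  simp [snd]

lemma fst_comp_comul : (fst R C C : C ⊗[R] C →ₗ[R] C) ∘ₗ comul = LinearMap.id := by
  ext x
  simp [← (ℛ R x).eq, sum_counit_smul']

lemma snd_comp_comul : (snd R C C : C ⊗[R] C →ₗ[R] C) ∘ₗ comul = LinearMap.id := by
  ext x
  simp [← (ℛ R x).eq, sum_counit_smul]

lemma fst_comp_map (f : C →ₗ[R] C') (g : D →ₗc[R] D') :
    (fst R C' D' : C' ⊗[R] D' →ₗ[R] C') ∘ₗ _root_.TensorProduct.map f (g : D →ₗ[R] D') =
      f ∘ₗ (fst R C D : C ⊗[R] D →ₗ[R] C) := by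
  ext c d
  simp

lemma snd_comp_map (f : C →ₗc[R] C') (g : D →ₗ[R] D') :
    (snd R C' D' : C' ⊗[R] D' →ₗ[R] D') ∘ₗ _root_.TensorProduct.map (f : C →ₗ[R] C') g =
      g ∘ₗ (snd R C D : C ⊗[R] D →ₗ[R] D) := by
  ext c d
  simp

local notation "α" => (Coalgebra.TensorProduct.assoc R R C D E : _ →ₗ[R] C ⊗[R] (D ⊗[R] E))

lemma fst_comp_assoc :
    (fst R C (D ⊗[R] E) : C ⊗[R] (D ⊗[R] E) →ₗ[R] C) ∘ₗ α =
      (fst R C D : C ⊗[R] D →ₗ[R] C) ∘ₗ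
        (fst R (C ⊗[R] D) E : (C ⊗[R] D) ⊗[R] E →ₗ[R] C ⊗[R] D) := by
  ext x y z
  simp [smul_smul, mul_comm]

lemma fst_comp_snd_comp_assoc :
    (fst R D E : D ⊗[R] E →ₗ[R] D) ∘ₗ
        (snd R C (D ⊗[R] E) : C ⊗[R] (D ⊗[R] E) →ₗ[R] D ⊗[R] E) ∘ₗ α =
      (snd R C D : C ⊗[R] D →ₗ[R] D) ∘ₗ
        (fst R (C ⊗[R] D) E : (C ⊗[R] D) ⊗[R] E →ₗ[R] C ⊗[R] D) := by
  ext x y z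
  simp [smul_smul, mul_comm]

lemma snd_comp_snd_comp_assoc :
    (snd R D E : D ⊗[R] E →ₗ[R] E) ∘ₗ
        (snd R C (D ⊗[R] E) : C ⊗[R] (D ⊗[R] E) →ₗ[R] D ⊗[R] E) ∘ₗ α =
      (snd R (C ⊗[R] D) E : (C ⊗[R] D) ⊗[R] E →ₗ[R] E) := by
  ext x y z
  simp [counit_tmul, smul_smul, mul_comm]

lemma convMul_fst_apply_tmul (f : C →ₗ[R] A) (F : C ⊗[R] D →ₗ[R] A) (x : C) (y : D) :
    (toConv (f ∘ₗ (fst R C D : C ⊗[R] D →ₗ[R] C)) * toConv F) (x ⊗ₜ y) =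
      (toConv f * toConv (F ∘ₗ (TensorProduct.mk R C D).flip y)) x := by
  rw [convMul_apply, TensorProduct.comul_tmul, (ℛ R x).convMul_apply, ← (ℛ R x).eq,
    ← (ℛ R y).eq]
  simp only [tmul_sum, sum_tmul, map_sum, AlgebraTensorModule.tensorTensorTensorComm_tmul,
    _root_.TensorProduct.map_tmul, coe_comp, coe_coe, Function.comp_apply, fst_tmul, map_smul,
    mul'_apply, Algebra.smul_mul_assoc, flip_apply, mk_apply]
  rw [Finset.sum_comm]
  refine Finset.sum_congr rfl fun i _ => ?_
  simp_rw [← mul_smul_comm, ← Finset.mul_sum, ← map_smul, ← TensorProduct.tmul_smul, ← map_sum,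
    ← TensorProduct.tmul_sum, sum_counit_smul]

lemma convMul_fst_snd_apply_tmul (f : C →ₗ[R] A) (g : D →ₗ[R] A) (x : C) (y : D) :
    (toConv (f ∘ₗ (fst R C D : C ⊗[R] D →ₗ[R] C)) *
      toConv (g ∘ₗ (snd R C D : C ⊗[R] D →ₗ[R] D))) (x ⊗ₜ y) = f x * g y := by
  rw [convMul_apply, TensorProduct.comul_tmul, ← (ℛ R x).eq, ← (ℛ R y).eq]
  simp only [tmul_sum, sum_tmul, map_sum, AlgebraTensorModule.tensorTensorTensorComm_tmul,
    _root_.TensorProduct.map_tmul, coe_comp, coe_coe, Function.comp_apply, fst_tmul, map_smul,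
    snd_tmul, tmul_smul, mul'_apply, Algebra.smul_mul_assoc]
  calc _ = (∑ i ∈ (ℛ R x).index, counit (R := R) ((ℛ R x).right i) • f ((ℛ R x).left i)) *
        ∑ j ∈ (ℛ R y).index, counit (R := R) ((ℛ R y).left j) • g ((ℛ R y).right j) := by
        rw [Finset.sum_mul_sum, Finset.sum_comm]
        simp only [smul_mul_smul_comm, smul_smul]
    _ = f x * g y := by
        simp_rw [← map_smul, ← map_sum, sum_counit_smul, sum_counit_smul']

lemma convMul_snd_fst_apply_tmul (g : D →ₗ[R] A) (k : C →ₗ[R] A) (x : C) (y : D) :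
    (toConv (g ∘ₗ (snd R C D : C ⊗[R] D →ₗ[R] D)) *
      toConv (k ∘ₗ (fst R C D : C ⊗[R] D →ₗ[R] C))) (x ⊗ₜ y) = g y * k x := by
  rw [convMul_apply, TensorProduct.comul_tmul, ← (ℛ R x).eq, ← (ℛ R y).eq]
  simp only [tmul_sum, sum_tmul, map_sum, AlgebraTensorModule.tensorTensorTensorComm_tmul,
    _root_.TensorProduct.map_tmul, coe_comp, coe_coe, Function.comp_apply, snd_tmul, map_smul,
    fst_tmul, tmul_smul, mul'_apply, Algebra.smul_mul_assoc]
  calc _ = (∑ j ∈ (ℛ R y).index, counit (R := R) ((ℛ R y).right j) • g ((ℛ R y).left j)) *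
        ∑ i ∈ (ℛ R x).index, counit (R := R) ((ℛ R x).left i) • k ((ℛ R x).right i) := by
        simp only [Finset.sum_mul_sum, smul_mul_smul_comm, smul_smul]
    _ = g y * k x := by
        simp_rw [← map_smul, ← map_sum, sum_counit_smul, sum_counit_smul']

end Coalgebra.TensorProduct

namespace CoalgHom

open Coalgebra.TensorProduct

variable {R A C D E : Type*} [CommSemiring R] [AddCommMonoid C] [Module R C] [Coalgebra R C]
  [Coalgebra.IsCocomm R C] [AddCommMonoid D] [Module R D] [Coalgebra R D]
  [AddCommMonoid E] [Module R E] [Coalgebra R E]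

def pair (f : C →ₗc[R] D) (g : C →ₗc[R] E) : C →ₗc[R] D ⊗[R] E :=
  (Coalgebra.TensorProduct.map f g).comp (Coalgebra.comulCoalgHom R C)

lemma coe_pair (f : C →ₗc[R] D) (g : C →ₗc[R] E) :
    (f.pair g : C →ₗ[R] D ⊗[R] E) =
      _root_.TensorProduct.map (f : C →ₗ[R] D) (g : C →ₗ[R] E) ∘ₗ Coalgebra.comul := rfl

lemma fst_comp_pair (f : C →ₗc[R] D) (g : C →ₗc[R] E) :
    (fst R D E : D ⊗[R] E →ₗ[R] D) ∘ₗ (f.pair g : C →ₗ[R] D ⊗[R] E) = f := by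
  rw [coe_pair, ← LinearMap.comp_assoc, fst_comp_map, LinearMap.comp_assoc, fst_comp_comul,
    LinearMap.comp_id]

lemma snd_comp_pair (f : C →ₗc[R] D) (g : C →ₗc[R] E) :
    (snd R D E : D ⊗[R] E →ₗ[R] E) ∘ₗ (f.pair g : C →ₗ[R] D ⊗[R] E) = g := by
  rw [coe_pair, ← LinearMap.comp_assoc, snd_comp_map, LinearMap.comp_assoc, snd_comp_comul,
    LinearMap.comp_id]

def convMul [Semiring A] [Bialgebra R A] (f g : C →ₗc[R] A) : C →ₗc[R] A :=
  (Bialgebra.mulCoalgHom R A).comp (f.pair g)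

@[simp] lemma toConv_convMul [Semiring A] [Bialgebra R A] (f g : C →ₗc[R] A) :
    toConv (f.convMul g : C →ₗ[R] A) = toConv (f : C →ₗ[R] A) * toConv (g : C →ₗ[R] A) := rfl

end CoalgHom

section RotaBaxter

open HopfAlgebra (antipode antipodeCoalgHom)

variable {K H : Type u} [Field K] [Ring H] [HopfAlgebra K H]

local notation "p₁" => (Coalgebra.TensorProduct.fst K H H : H ⊗[K] H →ₗ[K] H)
local notation "p₂" => (Coalgebra.TensorProduct.snd K H H : H ⊗[K] H →ₗ[K] H)
local notation "P₁" => (Coalgebra.TensorProduct.fst K (H ⊗[K] H) H : (H ⊗[K] H) ⊗[K] H →ₗ[K] H ⊗[K] H)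
local notation "P₂" => (Coalgebra.TensorProduct.snd K (H ⊗[K] H) H : (H ⊗[K] H) ⊗[K] H →ₗ[K] H)
local notation "α" => (Coalgebra.TensorProduct.assoc K K H H H : (H ⊗[K] H) ⊗[K] H →ₗ[K] H ⊗[K] (H ⊗[K] H))

lemma IsCocomm.coalgebraIsCocomm (hcc : IsCocomm K H) : Coalgebra.IsCocomm K H :=
  ⟨LinearMap.ext hcc⟩

/-- For coalgebra maps `u v : C → H`, this is `x ↦ u(x₁) *_B v(x₂)`. -/
def mulBConv {C : Type*} [AddCommMonoid C] [Module K C] [Coalgebra K C] (B : H →ₗ[K] H)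
    (u v : C →ₗ[K] H) : WithConv (C →ₗ[K] H) :=
  toConv (B ∘ₗ u) * toConv v * toConv (antipode K ∘ₗ B ∘ₗ u) * toConv u

lemma mulB_tmul (B : H →ₗ[K] H) (x y : H) :
    mulB B (x ⊗ₜ y) = (toConv B * toConv (mulLeft K y ∘ₗ
      (toConv (antipode K ∘ₗ B) * toConv LinearMap.id).ofConv)) x := by
  simp only [mulB, wrap, conv, aS, comp_apply, convMul_apply, map_tmul, LinearEquiv.coe_coe,
    LinearMap.id_apply]
  induction Coalgebra.comul (R := K) x using TensorProduct.induction_on with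
  | zero => simp
  | tmul a b => simp
  | add a b ha hb => simp only [map_add, add_tmul, ha, hb]

lemma toConv_SB (B : H →ₗ[K] H) :
    toConv (SB B) = toConv (antipode K ∘ₗ B) * (toConv (antipode K : H →ₗ[K] H) * toConv B) :=
  rfl

lemma toConv_mulB (B : H →ₗ[K] H) : toConv (mulB B) = mulBConv B p₁ p₂ := by
  have hfst : toConv (antipode K ∘ₗ B ∘ₗ p₁) * toConv p₁ =
      toConv ((toConv (antipode K ∘ₗ B) * toConv LinearMap.id).ofConv ∘ₗ p₁) := by
    rw [← convCompCoalgHom_toConv, toConv_ofConv, map_mul]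
    rfl
  refine WithConv.ext (TensorProduct.ext' fun x y => ?_)
  rw [mulBConv, mul_assoc, mul_assoc, hfst, Coalgebra.TensorProduct.convMul_fst_apply_tmul,
    mulB_tmul]
  congr 3
  ext z
  exact (Coalgebra.TensorProduct.convMul_snd_fst_apply_tmul LinearMap.id _ z y).symm

lemma mulB_comp_coalgHom (B : H →ₗ[K] H) {C : Type*} [AddCommMonoid C] [Module K C]
    [Coalgebra K C] (w : C →ₗc[K] H ⊗[K] H) :
    toConv (mulB B ∘ₗ (w : C →ₗ[K] H ⊗[K] H)) =
      mulBConv B (p₁ ∘ₗ (w : C →ₗ[K] H ⊗[K] H)) (p₂ ∘ₗ (w : C →ₗ[K] H ⊗[K] H)) := by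
  rw [← convCompCoalgHom_toConv, toConv_mulB, mulBConv, mulBConv]
  simp only [map_mul, convCompCoalgHom_toConv, comp_assoc]

lemma mulBConv_eq_mulB_comp_pair (B : H →ₗ[K] H) {C : Type*} [AddCommMonoid C] [Module K C]
    [Coalgebra K C] [Coalgebra.IsCocomm K C] (u v : C →ₗc[K] H) :
    mulBConv B u v = toConv (mulB B ∘ₗ (u.pair v : C →ₗ[K] H ⊗[K] H)) := by
  rw [mulB_comp_coalgHom, CoalgHom.fst_comp_pair, CoalgHom.snd_comp_pair]

namespace IsRotaBaxter

variable {B : H →ₗ[K] H}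

def coalgHom (hB : IsRotaBaxter B) : H →ₗc[K] H where
  toLinearMap := B
  counit_comp := hB.2.1
  map_comp_comul := hB.1.symm

lemma mul_antipode_comp (hB : IsRotaBaxter B) : toConv B * toConv (antipode K ∘ₗ B) = 1 :=
  HopfAlgebra.coalgHom_mul_antipode_comp hB.coalgHom

lemma antipode_comp_mul (hB : IsRotaBaxter B) : toConv (antipode K ∘ₗ B) * toConv B = 1 :=
  HopfAlgebra.antipode_comp_coalgHom_mul hB.coalgHom

lemma map_one (hB : IsRotaBaxter B) : B 1 = 1 := by
  have hg : IsGroupLikeElem K (B 1) := IsGroupLikeElem.one.map hB.coalgHom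
  have h := hB.2.2 1 1
  simp only [mulB_tmul, convMul_apply, Bialgebra.comul_one, Algebra.TensorProduct.one_def,
    map_tmul, mul'_apply, comp_apply, mulLeft_apply, one_mul, LinearMap.id_apply, mul_one,
    hg.mul_antipode_cancel] at h
  exact hg.isUnit.mul_eq_right.mp h

lemma comp_convOne (hB : IsRotaBaxter B) {C : Type*} [AddCommMonoid C] [Module K C]
    [Coalgebra K C] : toConv (B ∘ₗ (1 : WithConv (C →ₗ[K] H)).ofConv) = 1 := by
  ext c
  simp [Algebra.algebraMap_eq_smul_one, hB.map_one]

lemma toConv_comp_mulB (hB : IsRotaBaxter B) :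
    toConv (B ∘ₗ mulB B) = toConv (B ∘ₗ p₁) * toConv (B ∘ₗ p₂) := by
  refine WithConv.ext (TensorProduct.ext' fun x y => ?_)
  rw [comp_apply, ← hB.2.2, Coalgebra.TensorProduct.convMul_fst_snd_apply_tmul]

lemma comp_mulBConv (hB : IsRotaBaxter B) {C : Type*} [AddCommMonoid C] [Module K C]
    [Coalgebra K C] [Coalgebra.IsCocomm K C] (u v : C →ₗc[K] H) :
    toConv (B ∘ₗ (mulBConv B (u : C →ₗ[K] H) (v : C →ₗ[K] H)).ofConv) =
      toConv (B ∘ₗ (u : C →ₗ[K] H)) * toConv (B ∘ₗ (v : C →ₗ[K] H)) := by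
  rw [mulBConv_eq_mulB_comp_pair, ofConv_toConv, ← comp_assoc, ← convCompCoalgHom_toConv,
    hB.toConv_comp_mulB, map_mul, convCompCoalgHom_toConv, convCompCoalgHom_toConv, comp_assoc,
    comp_assoc, CoalgHom.fst_comp_pair, CoalgHom.snd_comp_pair]

lemma mulBConv_assoc (hB : IsRotaBaxter B) {C : Type*} [AddCommMonoid C] [Module K C]
    [Coalgebra K C] [Coalgebra.IsCocomm K C] (u v w : C →ₗc[K] H) :
    mulBConv B (mulBConv B (u : C →ₗ[K] H) (v : C →ₗ[K] H)).ofConv (w : C →ₗ[K] H) =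
      mulBConv B (u : C →ₗ[K] H) (mulBConv B (v : C →ₗ[K] H) (w : C →ₗ[K] H)).ofConv := by
  have hBu : toConv (antipode K ∘ₗ B ∘ₗ (u : C →ₗ[K] H)) * toConv (B ∘ₗ (u : C →ₗ[K] H)) = 1 :=
    HopfAlgebra.antipode_comp_coalgHom_mul (hB.coalgHom.comp u)
  have hBuv := hB.comp_mulBConv u v
  have hSBuv : toConv (antipode K ∘ₗ B ∘ₗ (mulBConv B (u : C →ₗ[K] H) (v : C →ₗ[K] H)).ofConv) =
      toConv (antipode K ∘ₗ B ∘ₗ (v : C →ₗ[K] H)) *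
        toConv (antipode K ∘ₗ B ∘ₗ (u : C →ₗ[K] H)) := by
    rw [← ofConv_toConv (B ∘ₗ _), hBuv, HopfAlgebra.antipode_comp_convMul]
  set m := mulBConv B (u : C →ₗ[K] H) (v : C →ₗ[K] H) with hm
  rw [mulBConv, hBuv, hSBuv, toConv_ofConv, hm]
  simp only [mulBConv, toConv_ofConv, mul_assoc]
  rw [← mul_assoc (toConv (antipode K ∘ₗ B ∘ₗ (u : C →ₗ[K] H))), hBu, one_mul]

lemma mulB_one_tmul (hB : IsRotaBaxter B) (x : H) : mulB B (1 ⊗ₜ x) = x := by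
  simp [mulB_tmul, convMul_apply, Bialgebra.comul_one, Algebra.TensorProduct.one_def, hB.map_one]

lemma mulB_tmul_one (hB : IsRotaBaxter B) (x : H) : mulB B (x ⊗ₜ 1) = x := by
  rw [mulB_tmul, mulLeft_one, id_comp, toConv_ofConv, ← mul_assoc, hB.mul_antipode_comp, one_mul]
  rfl

lemma mulBConv_id_SB (hB : IsRotaBaxter B) : mulBConv B LinearMap.id (SB B) = 1 := by
  rw [mulBConv, toConv_SB, comp_id, ← mul_assoc, ← mul_assoc, hB.mul_antipode_comp, one_mul,
    mul_assoc (toConv (antipode K : H →ₗ[K] H)), hB.mul_antipode_comp, mul_one, antipode_mul_id]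

variable [Coalgebra.IsCocomm K H]

def mulBCoalgHom (hB : IsRotaBaxter B) : H ⊗[K] H →ₗc[K] H :=
  (((hB.coalgHom.comp (Coalgebra.TensorProduct.fst K H H)).convMul
    (Coalgebra.TensorProduct.snd K H H)).convMul
      ((antipodeCoalgHom.comp hB.coalgHom).comp (Coalgebra.TensorProduct.fst K H H))).convMul
        (Coalgebra.TensorProduct.fst K H H)

lemma coe_mulBCoalgHom (hB : IsRotaBaxter B) : (hB.mulBCoalgHom : H ⊗[K] H →ₗ[K] H) = mulB B :=
  congrArg ofConv (toConv_mulB B).symm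

@[simp] lemma mulBCoalgHom_apply (hB : IsRotaBaxter B) (w : H ⊗[K] H) :
    hB.mulBCoalgHom w = mulB B w :=
  congr($(hB.coe_mulBCoalgHom) w)

lemma comul_mulB (hB : IsRotaBaxter B) (x y : H) :
    Coalgebra.comul (R := K) (mulB B (x ⊗ₜ[K] y)) =
      TensorProduct.map (mulB B) (mulB B)
        (TensorProduct.tensorTensorTensorComm K H H H H
          (Coalgebra.comul (R := K) x ⊗ₜ[K] Coalgebra.comul (R := K) y)) := by
  have h := congr($(hB.mulBCoalgHom.map_comp_comul) (x ⊗ₜ y))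
  simpa only [comp_apply, TensorProduct.comul_tmul, CoalgHom.toLinearMap_eq_coe,
    coe_mulBCoalgHom, AlgebraTensorModule.tensorTensorTensorComm_eq] using h.symm

lemma counit_mulB (hB : IsRotaBaxter B) (x y : H) :
    Coalgebra.counit (R := K) (mulB B (x ⊗ₜ[K] y)) =
      Coalgebra.counit (R := K) x * Coalgebra.counit (R := K) y := by
  rw [← hB.mulBCoalgHom_apply, CoalgHomClass.counit_comp_apply, TensorProduct.counit_tmul,
    smul_eq_mul, mul_comm]

lemma toConv_mulB_comp_map_mulB_id (hB : IsRotaBaxter B) :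
    toConv (mulB B ∘ₗ TensorProduct.map (mulB B) LinearMap.id) =
      mulBConv B (mulBConv B (p₁ ∘ₗ P₁) (p₂ ∘ₗ P₁)).ofConv P₂ := by
  have hm : TensorProduct.map (mulB B) LinearMap.id =
      (Coalgebra.TensorProduct.map hB.mulBCoalgHom (CoalgHom.id K H) :
        (H ⊗[K] H) ⊗[K] H →ₗ[K] H ⊗[K] H) := by
    rw [Coalgebra.TensorProduct.map_toLinearMap, AlgebraTensorModule.map_eq, coe_mulBCoalgHom]
    rfl
  have h₁ : p₁ ∘ₗ TensorProduct.map (mulB B) LinearMap.id = mulB B ∘ₗ P₁ :=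
    Coalgebra.TensorProduct.fst_comp_map (mulB B) (CoalgHom.id K H)
  have h₂ : p₂ ∘ₗ TensorProduct.map (mulB B) LinearMap.id = P₂ := by
    rw [← hB.coe_mulBCoalgHom, Coalgebra.TensorProduct.snd_comp_map, id_comp]
  rw [hm, mulB_comp_coalgHom, ← hm, h₁, h₂, ← mulB_comp_coalgHom, ofConv_toConv]

lemma toConv_mulB_comp_map_id_mulB_comp_assoc (hB : IsRotaBaxter B) :
    toConv (mulB B ∘ₗ TensorProduct.map LinearMap.id (mulB B) ∘ₗ α) =
      mulBConv B (p₁ ∘ₗ P₁) (mulBConv B (p₂ ∘ₗ P₁) P₂).ofConv := by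
  let Q := (Coalgebra.TensorProduct.snd K H (H ⊗[K] H)).comp
    (Coalgebra.TensorProduct.assoc K K H H H).toCoalgHom
  have hm : TensorProduct.map LinearMap.id (mulB B) ∘ₗ α =
      ((Coalgebra.TensorProduct.map (CoalgHom.id K H) hB.mulBCoalgHom).comp
        (Coalgebra.TensorProduct.assoc K K H H H).toCoalgHom :
        (H ⊗[K] H) ⊗[K] H →ₗ[K] H ⊗[K] H) := by
    rw [CoalgHom.comp_toLinearMap, Coalgebra.TensorProduct.map_toLinearMap,
      AlgebraTensorModule.map_eq, coe_mulBCoalgHom]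
    rfl
  have h₁ : p₁ ∘ₗ TensorProduct.map LinearMap.id (mulB B) ∘ₗ α = p₁ ∘ₗ P₁ := by
    rw [← comp_assoc, ← hB.coe_mulBCoalgHom, Coalgebra.TensorProduct.fst_comp_map, id_comp,
      Coalgebra.TensorProduct.fst_comp_assoc]
  have h₂ : p₂ ∘ₗ TensorProduct.map LinearMap.id (mulB B) ∘ₗ α =
      mulB B ∘ₗ (Q : (H ⊗[K] H) ⊗[K] H →ₗ[K] H ⊗[K] H) := by
    rw [← comp_assoc]
    exact congrArg (· ∘ₗ α) (Coalgebra.TensorProduct.snd_comp_map (CoalgHom.id K H) (mulB B))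
  have hQ : toConv (mulB B ∘ₗ (Q : (H ⊗[K] H) ⊗[K] H →ₗ[K] H ⊗[K] H)) =
      mulBConv B (p₂ ∘ₗ P₁) P₂ := by
    rw [mulB_comp_coalgHom]
    exact congrArg₂ (mulBConv B) Coalgebra.TensorProduct.fst_comp_snd_comp_assoc
      Coalgebra.TensorProduct.snd_comp_snd_comp_assoc
  rw [hm, mulB_comp_coalgHom, ← hm, h₁, h₂, ← hQ, ofConv_toConv]

lemma mulB_assoc (hB : IsRotaBaxter B) (x y z : H) :
    mulB B (mulB B (x ⊗ₜ[K] y) ⊗ₜ[K] z) = mulB B (x ⊗ₜ[K] mulB B (y ⊗ₜ[K] z)) := by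
  have h := (hB.toConv_mulB_comp_map_mulB_id.trans (hB.mulBConv_assoc
    ((Coalgebra.TensorProduct.fst K H H).comp (Coalgebra.TensorProduct.fst K (H ⊗[K] H) H))
    ((Coalgebra.TensorProduct.snd K H H).comp (Coalgebra.TensorProduct.fst K (H ⊗[K] H) H))
    (Coalgebra.TensorProduct.snd K (H ⊗[K] H) H))).trans
      hB.toConv_mulB_comp_map_id_mulB_comp_assoc.symm
  simpa using congr(ofConv $h ((x ⊗ₜ y) ⊗ₜ z))

def sBCoalgHom (hB : IsRotaBaxter B) : H →ₗc[K] H :=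
  (antipodeCoalgHom.comp hB.coalgHom).convMul (antipodeCoalgHom.convMul hB.coalgHom)

@[simp] lemma coe_sBCoalgHom (hB : IsRotaBaxter B) : (hB.sBCoalgHom : H →ₗ[K] H) = SB B := rfl

lemma mulB_map_id_SB_comul (hB : IsRotaBaxter B) (x : H) :
    mulB B (TensorProduct.map LinearMap.id (SB B) (Coalgebra.comul (R := K) x)) =
      Coalgebra.counit (R := K) x • (1 : H) := by
  have h := (mulBConv_eq_mulB_comp_pair B (CoalgHom.id K H) hB.sBCoalgHom).symm.trans
    hB.mulBConv_id_SB
  simpa [CoalgHom.coe_pair, Algebra.algebraMap_eq_smul_one] using congr(ofConv $h x)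

/-- Applying `B` to `x₁ *_B S_B(x₂) = ε(x)` shows that `B ∘ S_B` is a convolution inverse of
`B`, as is `S ∘ B`. -/
lemma comp_SB (hB : IsRotaBaxter B) : B ∘ₗ SB B = antipode K ∘ₗ B := by
  have h : toConv (B ∘ₗ (mulBConv B LinearMap.id (SB B)).ofConv) =
      toConv (B ∘ₗ LinearMap.id) * toConv (B ∘ₗ SB B) :=
    hB.comp_mulBConv (CoalgHom.id K H) hB.sBCoalgHom
  rw [hB.mulBConv_id_SB, hB.comp_convOne, comp_id] at h
  exact congrArg ofConv (left_inv_eq_right_inv hB.antipode_comp_mul h.symm).symm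

lemma mulBConv_SB_id (hB : IsRotaBaxter B) : mulBConv B (SB B) LinearMap.id = 1 := by
  have hSSB : toConv (antipode K ∘ₗ antipode K ∘ₗ B) = toConv B :=
    left_inv_eq_right_inv (HopfAlgebra.antipode_comp_coalgHom_mul
      (antipodeCoalgHom.comp hB.coalgHom)) hB.antipode_comp_mul
  rw [mulBConv, hB.comp_SB, hSSB, toConv_SB]
  simp only [mul_assoc]
  rw [← mul_assoc (toConv B), hB.mul_antipode_comp, one_mul, ← mul_assoc (toConv LinearMap.id),
    id_mul_antipode, one_mul, hB.antipode_comp_mul]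

lemma mulB_map_SB_id_comul (hB : IsRotaBaxter B) (x : H) :
    mulB B (TensorProduct.map (SB B) LinearMap.id (Coalgebra.comul (R := K) x)) =
      Coalgebra.counit (R := K) x • (1 : H) := by
  have h := (mulBConv_eq_mulB_comp_pair B hB.sBCoalgHom (CoalgHom.id K H)).symm.trans
    hB.mulBConv_SB_id
  simpa [CoalgHom.coe_pair, Algebra.algebraMap_eq_smul_one] using congr(ofConv $h x)

end IsRotaBaxter

end RotaBaxter

section

variable {K H : Type u} [Field K] [CharZero K] [Ring H] [HopfAlgebra K H]

/-- the descendent structure `H_B = (H, *_B, 1, Δ, ε, S_B)` is a Hopf algebra. -/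
theorem stmt2 (B : H →ₗ[K] H) (hcc : IsCocomm K H) (hB : IsRotaBaxter B) :
    (∀ x y z : H,
      mulB B (mulB B (x ⊗ₜ[K] y) ⊗ₜ[K] z) = mulB B (x ⊗ₜ[K] mulB B (y ⊗ₜ[K] z))) ∧
    (∀ x : H, mulB B ((1 : H) ⊗ₜ[K] x) = x ∧ mulB B (x ⊗ₜ[K] (1 : H)) = x) ∧
    (∀ x y : H,
      Coalgebra.comul (R := K) (mulB B (x ⊗ₜ[K] y)) =
        TensorProduct.map (mulB B) (mulB B)
          (TensorProduct.tensorTensorTensorComm K H H H H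
            (Coalgebra.comul (R := K) x ⊗ₜ[K] Coalgebra.comul (R := K) y)) ∧
      Coalgebra.counit (R := K) (mulB B (x ⊗ₜ[K] y)) =
        Coalgebra.counit (R := K) x * Coalgebra.counit (R := K) y) ∧
    (∀ x : H,
      mulB B (TensorProduct.map (SB B) LinearMap.id (Coalgebra.comul (R := K) x)) =
        Coalgebra.counit (R := K) x • (1 : H) ∧
      mulB B (TensorProduct.map LinearMap.id (SB B) (Coalgebra.comul (R := K) x)) =
        Coalgebra.counit (R := K) x • (1 : H)) := by
  have := hcc.coalgebraIsCocomm
  exact ⟨hB.mulB_assoc, fun x => ⟨hB.mulB_one_tmul x, hB.mulB_tmul_one x⟩,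
    fun x y => ⟨hB.comul_mulB x y, hB.counit_mulB x y⟩,
    fun x => ⟨hB.mulB_map_SB_id_comul x, hB.mulB_map_id_SB_comul x⟩⟩

end

end
end

section
/- Let A be a cocommutative Hopf algebra over a field of characteristic 0, let B : A → A be an idempotent Hopf algebra endomorphism (B ∘ B = B, an algebra and coalgebra map), and define B' : A → A by B'(x) = x₁ B(S(x₂)). Then the following are equivalent: (a) B' is an idempotent Hopf algebra endomorphism of A and B(x₁)B'(x₂) = x for all x ∈ A (i.e. (B, B') is a projection homomorphism pair); (b) the images of B and B' commute, i.e. B(x)B'(y) = B'(y)B(x) for all x, y ∈ A. -/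
/-!
In the convolution algebra of `End H`, `B' = id ⋆ (B ∘ S)`, and the whole argument rests on
the identity `B'(a b) = a₁ B'(b) B(S a₂)`.

If the images of `B` and `B'` commute, `B'(b)` can be moved past `B(S a₂)`, so `B'` is
multiplicative. By cocommutativity, `S` and the convolution of two coalgebra maps are coalgebra
maps, hence so is `B'`. The pair identity is `B ⋆ B' = B' ⋆ B = id ⋆ ((B ∘ S) ⋆ B) = id`, and
idempotence comes from `B' ∘ B = ηε` (idempotence of `B`): the algebra map `B'` sends
`id ⋆ (B ∘ S)` to `B' ⋆ ηε = B'`.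

Conversely, if `B'` is multiplicative, then `B'(B(x) y) = ε(x) B'(y)` because `B' ∘ B = ηε`.
Read through the key identity, this says that `x ↦ B(x) c` and `x ↦ c B(x)` (with `c = B'(y)`)
have the same convolution product with `B ∘ S`. Since `B ∘ S` is convolution invertible, the two
maps agree.
-/

open TensorProduct LinearMap

noncomputable section

universe u

section

open Coalgebra HopfAlgebra WithConv

section Convolution
variable {R A B C : Type*} [CommSemiring R] [AddCommMonoid C] [Module R C] [Coalgebra R C]

section Semiring
variable [Semiring A] [Algebra R A]

lemma LinearMap.convMul_comm_of_commute [Coalgebra.IsCocomm R C] {f g : C →ₗ[R] A}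
    (h : ∀ x y, Commute (f x) (g y)) : toConv f * toConv g = toConv g * toConv f := by
  ext c
  rw [convMul_apply, ← comm_comul R c, convMul_apply]
  induction comul (R := R) c with
  | zero => simp
  | tmul a b => simp [(h b a).eq]
  | add x y hx hy => simp_all [map_add]

lemma LinearMap.mulLeft_comp_convMul (a : A) (f g : C →ₗ[R] A) :
    toConv (mulLeft R a ∘ₗ f) * toConv g =
      toConv (mulLeft R a ∘ₗ (toConv f * toConv g).ofConv) := by
  ext c
  simp [(ℛ R c).convMul_apply, mul_assoc]

lemma LinearMap.mulRight_comp_convMul_of_commute {a : A} {f g : C →ₗ[R] A}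
    (h : ∀ x, Commute a (g x)) :
    toConv (mulRight R a ∘ₗ f) * toConv g =
      toConv (mulRight R a ∘ₗ (toConv f * toConv g).ofConv) := by
  ext c
  simp [(ℛ R c).convMul_apply, mul_assoc, (h _).eq]

lemma TensorProduct.map_convOne_comp_comul [Semiring B] [Algebra R B] :
    map (1 : WithConv (C →ₗ[R] A)).ofConv (1 : WithConv (C →ₗ[R] B)).ofConv ∘ₗ comul =
      (1 : WithConv (C →ₗ[R] A ⊗[R] B)).ofConv := by
  ext x
  rw [LinearMap.comp_apply, ← (ℛ R x).eq]
  simp only [map_sum, map_tmul, convOne_apply, Algebra.algebraMap_eq_smul_one, smul_tmul_smul,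
    ← Finset.sum_smul, Algebra.TensorProduct.one_def]
  congr 1
  conv_rhs => rw [← sum_counit_smul (ℛ R x)]
  simp

end Semiring

variable [Semiring A] [Bialgebra R A] [Coalgebra.IsCocomm R C]

def CoalgHom.convMul_s19 (f g : C →ₗc[R] A) : C →ₗc[R] A :=
  (Bialgebra.mulCoalgHom R A).comp ((Coalgebra.TensorProduct.map f g).comp (comulCoalgHom R C))

end Convolution

section Antipode
variable {R A B : Type*} [CommSemiring R] [Semiring A] [HopfAlgebra R A]

lemma AlgHom.convMul_comp_antipode [Semiring B] [Algebra R B] (f : A →ₐ[R] B) :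
    toConv f.toLinearMap * toConv (f.toLinearMap ∘ₗ antipode R) = 1 := by
  ext x
  simpa using congr($(algHom_comp_convMul_distrib f (toConv .id) (toConv (antipode R))) x).symm

lemma AlgHom.comp_antipode_convMul [Semiring B] [Algebra R B] (f : A →ₐ[R] B) :
    toConv (f.toLinearMap ∘ₗ antipode R) * toConv f.toLinearMap = 1 := by
  ext x
  simpa using congr($(algHom_comp_convMul_distrib f (toConv (antipode R)) (toConv .id)) x).symm

lemma AlgHom.commute_of_convMul_comp_antipode [Semiring B] [Algebra R B] (f : A →ₐ[R] B)
    {c : B}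
    (h : toConv (mulRight R c ∘ₗ f.toLinearMap) * toConv (f.toLinearMap ∘ₗ antipode R) =
      toConv (mulLeft R c ∘ₗ (1 : WithConv (A →ₗ[R] B)).ofConv)) (x : A) :
    Commute (f x) c := by
  have : toConv (mulRight R c ∘ₗ f.toLinearMap) = toConv (mulLeft R c ∘ₗ f.toLinearMap) :=
    calc toConv (mulRight R c ∘ₗ f.toLinearMap)
        = toConv (mulRight R c ∘ₗ f.toLinearMap) * toConv (f.toLinearMap ∘ₗ antipode R) *
            toConv f.toLinearMap := by rw [mul_assoc, f.comp_antipode_convMul, mul_one]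
      _ = toConv (mulLeft R c ∘ₗ f.toLinearMap) := by
        rw [h, mulLeft_comp_convMul, toConv_ofConv, one_mul, ofConv_toConv]
  exact congr($this x)

lemma HopfAlgebra.antipode_comp_bialgHom [Semiring B] [HopfAlgebra R B] (f : A →ₐc[R] B) :
    antipode R ∘ₗ f.toLinearMap = f.toLinearMap ∘ₗ antipode R := by
  apply toConv_injective
  refine left_inv_eq_right_inv (a := toConv f.toLinearMap) ?_
    (AlgHom.convMul_comp_antipode (f : A →ₐ[R] B))
  apply ofConv_injective
  have := convMul_comp_coalgHom_distrib (toConv (antipode R)) (toConv .id) f.toCoalgHom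
  rw [LinearMap.antipode_mul_id, convOne_comp_coalgHom] at this
  exact this.symm

/-- `Δ ∘ S` is a right convolution inverse of `Δ`, and `(S ⊗ S) ∘ Δ` a left one because `Δ` is a
coalgebra map when `A` is cocommutative. -/
lemma HopfAlgebra.comul_comp_antipode_s19 [Coalgebra.IsCocomm R A] :
    comul ∘ₗ antipode R = map (antipode R) (antipode R) ∘ₗ comul (R := R) (A := A) := by
  refine (toConv_injective <| left_inv_eq_right_inv ?_ comul_right_inv).symm
  apply ofConv_injective
  have := convMul_comp_coalgHom_distrib (toConv (map (antipode R) (antipode R)))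
    (toConv (map .id .id)) (comulCoalgHom R A)
  rw [map_convMul_map, LinearMap.antipode_mul_id, map_id, LinearMap.id_comp] at this
  exact this.symm.trans map_convOne_comp_comul

variable (R A) in
def HopfAlgebra.antipodeCoalgHom_s19 [Coalgebra.IsCocomm R A] : A →ₗc[R] A where
  toLinearMap := antipode R
  counit_comp := counit_comp_antipode
  map_comp_comul := comul_comp_antipode_s19.symm

end Antipode

section DescendentOperator
variable {K H : Type u} [Field K] [Ring H] [HopfAlgebra K H]

lemma Bt_eq_convMul (B : H →ₗ[K] H) :
    Bt B = (toConv LinearMap.id * toConv (B ∘ₗ antipode K)).ofConv := rfl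

lemma Bt_one (B : H →ₗ[K] H) (hB : B 1 = 1) : Bt B 1 = 1 := by
  simp [Bt, conv, aS, Algebra.TensorProduct.one_def, hB]

lemma Bt_comp_mulRight (B : H →ₗ[K] H) (hB : ∀ x y, B (x * y) = B x * B y) (b : H) :
    Bt B ∘ₗ mulRight K b = (toConv (mulRight K (Bt B b)) * toConv (B ∘ₗ antipode K)).ofConv := by
  ext a
  rw [LinearMap.comp_apply, mulRight_apply, Bt_eq_convMul, ((ℛ K a).mul (ℛ K b)).convMul_apply,
    (ℛ K a).convMul_apply, (ℛ K b).convMul_apply, Repr.mul_index, Finset.sum_product]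
  refine Finset.sum_congr rfl fun i _ => ?_
  simp [Finset.sum_mul, Finset.mul_sum, antipode_mul_antidistrib, hB, mul_assoc]

lemma Bt_mul_of_commute (B : H →ₗ[K] H) (hB : ∀ x y, B (x * y) = B x * B y)
    (h : ∀ x y, Commute (B x) (Bt B y)) (x y : H) : Bt B (x * y) = Bt B x * Bt B y := by
  have := congr($(Bt_comp_mulRight B hB y) x)
  rwa [← LinearMap.comp_id (mulRight K (Bt B y)),
    mulRight_comp_convMul_of_commute fun z => (h (antipode K z) y).symm] at this

variable (B : H →ₐc[K] H)

lemma comp_antipode_comp_self (hB : B.toLinearMap ∘ₗ B.toLinearMap = B.toLinearMap) :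
    (B.toLinearMap ∘ₗ antipode K) ∘ₗ B.toLinearMap = B.toLinearMap ∘ₗ antipode K := by
  rw [LinearMap.comp_assoc, antipode_comp_bialgHom, ← LinearMap.comp_assoc, hB]

lemma Bt_comp_self (hB : B.toLinearMap ∘ₗ B.toLinearMap = B.toLinearMap) :
    Bt B.toLinearMap ∘ₗ B.toLinearMap = (1 : WithConv (H →ₗ[K] H)).ofConv := by
  rw [Bt_eq_convMul, convMul_comp_coalgHom_distrib _ _ B.toCoalgHom]
  simp only [LinearMap.id_comp]
  erw [comp_antipode_comp_self B hB]
  exact congr(ofConv $(AlgHom.convMul_comp_antipode (B : H →ₐ[K] H)))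

lemma commute_of_Bt_mul (hB : B.toLinearMap ∘ₗ B.toLinearMap = B.toLinearMap)
    (hmul : ∀ x y, Bt B.toLinearMap (x * y) = Bt B.toLinearMap x * Bt B.toLinearMap y)
    (x y : H) : Commute (B x) (Bt B.toLinearMap y) := by
  refine AlgHom.commute_of_convMul_comp_antipode (B : H →ₐ[K] H) ?_ x
  change toConv (mulRight K (Bt B.toLinearMap y) ∘ₗ B.toLinearMap) *
    toConv (B.toLinearMap ∘ₗ antipode K) = _
  have hBt : Bt B.toLinearMap ∘ₗ mulRight K y ∘ₗ B.toLinearMap =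
      (toConv (mulRight K (Bt B.toLinearMap y) ∘ₗ B.toLinearMap) *
        toConv (B.toLinearMap ∘ₗ antipode K)).ofConv := by
    rw [← LinearMap.comp_assoc, Bt_comp_mulRight _ (map_mul B),
      convMul_comp_coalgHom_distrib _ _ B.toCoalgHom]
    erw [comp_antipode_comp_self B hB]
  ext z
  have hBtB : Bt B.toLinearMap (B z) = algebraMap K H (counit z) := congr($(Bt_comp_self B hB) z)
  rw [← hBt]
  simp only [LinearMap.comp_apply, mulRight_apply, mulLeft_apply, hmul]
  erw [hBtB]
  rw [convOne_apply, Algebra.commutes]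

lemma Bt_comp_Bt (hB : B.toLinearMap ∘ₗ B.toLinearMap = B.toLinearMap)
    (hmul : ∀ x y, Bt B.toLinearMap (x * y) = Bt B.toLinearMap x * Bt B.toLinearMap y) :
    Bt B.toLinearMap ∘ₗ Bt B.toLinearMap = Bt B.toLinearMap := by
  let Bt' : H →ₐ[K] H := .ofLinearMap (Bt B.toLinearMap) (Bt_one _ (map_one B)) hmul
  have hBtBS : Bt B.toLinearMap ∘ₗ B.toLinearMap ∘ₗ antipode K =
      (1 : WithConv (H →ₗ[K] H)).ofConv := by
    rw [← LinearMap.comp_assoc, Bt_comp_self B hB]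
    ext; simp
  have := algHom_comp_convMul_distrib Bt' (toConv .id) (toConv (B.toLinearMap ∘ₗ antipode K))
  simp only [LinearMap.comp_id, Bt', AlgHom.toLinearMap_ofLinearMap, ← Bt_eq_convMul] at this
  rw [hBtBS, toConv_ofConv, mul_one, ofConv_toConv] at this
  exact this

lemma conv_Bt_of_commute [Coalgebra.IsCocomm K H]
    (h : ∀ x y, Commute (B x) (Bt B.toLinearMap y)) :
    conv B.toLinearMap (Bt B.toLinearMap) = LinearMap.id := by
  have hBS : toConv (B.toLinearMap ∘ₗ antipode K) * toConv B.toLinearMap = 1 :=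
    AlgHom.comp_antipode_convMul (B : H →ₐ[K] H)
  change (toConv B.toLinearMap * toConv (Bt B.toLinearMap)).ofConv = _
  rw [convMul_comm_of_commute h, Bt_eq_convMul, toConv_ofConv, mul_assoc, hBS, mul_one,
    ofConv_toConv]

section Cocommutative
variable [Coalgebra.IsCocomm K H]

lemma Bt_eq_toLinearMap_convMul :
    Bt B.toLinearMap =
      ((CoalgHom.id K H).convMul_s19 (B.toCoalgHom.comp (antipodeCoalgHom_s19 K H))).toLinearMap := rfl

lemma comul_comp_Bt :
    comul ∘ₗ Bt B.toLinearMap = map (Bt B.toLinearMap) (Bt B.toLinearMap) ∘ₗ comul := by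
  rw [Bt_eq_toLinearMap_convMul]
  exact (CoalgHom.map_comp_comul _).symm

lemma counit_comp_Bt : counit ∘ₗ Bt B.toLinearMap = counit := by
  rw [Bt_eq_toLinearMap_convMul]
  exact CoalgHom.counit_comp _

end Cocommutative

end DescendentOperator

end

variable {K H : Type u} [Field K] [CharZero K] [Ring H] [HopfAlgebra K H]

/-- for an idempotent Hopf endomorphism `B` and `B' = Bt B` (i.e.
`B'(x) = x₁ B(S(x₂))`), `(B, B')` is a projection homomorphism pair iff the images of `B`
and `B'` commute. -/
theorem stmt19 (B : H →ₗ[K] H) (hcc : IsCocomm K H)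
    (hBmul : ∀ x y : H, B (x * y) = B x * B y) (hBone : B (1 : H) = 1)
    (hBcomul : Coalgebra.comul ∘ₗ B = TensorProduct.map B B ∘ₗ Coalgebra.comul)
    (hBcounit : Coalgebra.counit ∘ₗ B = Coalgebra.counit)
    (hBidem : B ∘ₗ B = B) :
    ((∀ x y : H, Bt B (x * y) = Bt B x * Bt B y) ∧ Bt B (1 : H) = 1 ∧
      (Coalgebra.comul ∘ₗ Bt B = TensorProduct.map (Bt B) (Bt B) ∘ₗ Coalgebra.comul) ∧
      (Coalgebra.counit ∘ₗ Bt B = Coalgebra.counit) ∧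
      Bt B ∘ₗ Bt B = Bt B ∧
      (∀ x : H, conv B (Bt B) x = x)) ↔
    (∀ x y : H, B x * Bt B y = Bt B y * B x) := by
  have : Coalgebra.IsCocomm K H := ⟨LinearMap.ext hcc⟩
  let Bh : H →ₐc[K] H :=
    { toLinearMap := B, map_one' := hBone, map_mul' := hBmul, counit_comp := hBcounit,
      map_comp_comul := hBcomul.symm }
  constructor
  · rintro ⟨hmul, -⟩ x y
    exact commute_of_Bt_mul Bh hBidem hmul x y
  · intro hcomm
    have hmul := Bt_mul_of_commute B hBmul hcomm
    exact ⟨hmul, Bt_one B hBone, comul_comp_Bt Bh, counit_comp_Bt Bh, Bt_comp_Bt Bh hBidem hmul,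
      fun x => congr($(conv_Bt_of_commute Bh hcomm) x)⟩

end
end
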